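/- Let K be a field, P ∈ K[x]^{m×n}, and s ∈ ℤ^n such that P is s-reduced, and let t = rdeg_s(P). Then for every k ≥ 1 and every Q ∈ K[x]^{k×m}, the s-leading matrix of the product satisfies lm_s(Q·P) = lm_t(Q) · lm_s(P). -/

import Mathlib

open Polynomial Matrix

noncomputable section

variable {K : Type*} [Field K]

/-- Degree of a univariate polynomial, viewed in `ℤ ∪ {⊥}`. -/
def pdegZ (p : K[X]) : WithBot ℤ := p.degree.map (Nat.cast : ℕ → ℤ)

/-- Shifted degree (`s`-degree) of a row vector. -/
def sdeg {n : ℕ} (s : Fin n → ℤ) (p : Fin n → K[X]) : WithBot ℤ :=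
  Finset.univ.sup fun j => pdegZ (p j) + (s j : WithBot ℤ)

/-- `s`-leading matrix of `P`. -/
def leadMat {m n : ℕ} (s : Fin n → ℤ) (P : Matrix (Fin m) (Fin n) K[X]) :
    Matrix (Fin m) (Fin n) K :=
  Matrix.of fun i j =>
    if pdegZ (P i j) + (s j : WithBot ℤ) = sdeg s (P i) then (P i j).leadingCoeff else 0

/-- `P` is `s`-reduced: its `s`-leading matrix has full row rank. -/
def IsShiftReduced {m n : ℕ} (s : Fin n → ℤ) (P : Matrix (Fin m) (Fin n) K[X]) : Prop :=
  (leadMat s P).rank = m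

/-- `j` is the `s`-pivot index of the row `p`: the largest index where the `s`-degree is attained. -/
def IsPivotIndex {n : ℕ} (s : Fin n → ℤ) (p : Fin n → K[X]) (j : Fin n) : Prop :=
  pdegZ (p j) + (s j : WithBot ℤ) = sdeg s p ∧
  ∀ j', j < j' → pdegZ (p j') + (s j' : WithBot ℤ) ≠ sdeg s p

/-- `P` is in `s`-weak Popov form: no zero row and strictly increasing `s`-pivot indices. -/
def IsWeakPopov {m n : ℕ} (s : Fin n → ℤ) (P : Matrix (Fin m) (Fin n) K[X]) : Prop :=
  (∀ i, P i ≠ 0) ∧ ∃ piv : Fin m → Fin n, StrictMono piv ∧ ∀ i, IsPivotIndex s (P i) (piv i)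

/-- The rows of `Kb` form a basis of the left kernel of `F`. -/
def IsKernelBasis {ℓ m : ℕ} {β : Type*} [Fintype β]
    (Kb : Matrix (Fin ℓ) (Fin m) K[X]) (F : Matrix (Fin m) β K[X]) : Prop :=
  (∀ i, Kb i ᵥ* F = 0) ∧
  LinearIndependent K[X] (fun i : Fin ℓ => Kb i) ∧
  ∀ p : Fin m → K[X], p ᵥ* F = 0 → ∃ u : Fin ℓ → K[X], p = u ᵥ* Kb

/-- Membership in the relation module `Rel_M(F)`. -/
def InRelModule {m n : ℕ} (M : Matrix (Fin n) (Fin n) K[X])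
    (F : Matrix (Fin m) (Fin n) K[X]) (p : Fin m → K[X]) : Prop :=
  ∃ q : Fin n → K[X], p ᵥ* F = q ᵥ* M

/-- The rows of `A` form a basis of the relation module `Rel_M(F)`. -/
def IsRelationBasis {ℓ m n : ℕ} (M : Matrix (Fin n) (Fin n) K[X])
    (A : Matrix (Fin ℓ) (Fin m) K[X]) (F : Matrix (Fin m) (Fin n) K[X]) : Prop :=
  (∀ i, InRelModule M F (A i)) ∧
  LinearIndependent K[X] (fun i : Fin ℓ => A i) ∧
  ∀ p : Fin m → K[X], InRelModule M F p → ∃ u : Fin ℓ → K[X], p = u ᵥ* A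

/-- Rank of a polynomial matrix: its rank over the fraction field `K(x)`. -/
def polyRank {α β : Type*} [Fintype β] (F : Matrix α β K[X]) : ℕ :=
  (F.map (algebraMap K[X] (RatFunc K))).rank

/-- Lexicographic comparison of tuples. -/
def lexLE {r n : ℕ} (a b : Fin r → Fin n) : Prop :=
  ∀ i, (∀ k, k < i → a k = b k) → a i ≤ b i

/-- `j` lists the column rank profile of `F`: the lexicographically smallest strictly
increasing tuple of `rank F` column indices selecting columns of full rank. -/
def IsColRankProfile {α : Type*} {n r : ℕ} (F : Matrix α (Fin n) K[X])
    (j : Fin r → Fin n) : Prop :=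
  StrictMono j ∧ polyRank F = r ∧ polyRank (F.submatrix id j) = r ∧
  ∀ j' : Fin r → Fin n, StrictMono j' → polyRank (F.submatrix id j') = r → lexLE j j'


/-!
Write `D` for the `t`-degree of a nonzero row `q` of `Q`. Since every row `P l` has `s`-degree
`t l`, each entry of `q P` has degree at most `D - s j`, and its coefficient of degree `D - s j`
only sees the coefficients of `q l` in degree `D - t l` and of `P l j` in degree `t l - s j`,
i.e. the entries of `lm_t(Q)` and `lm_s(P)`. So the coefficient vector of degree `D` of
`q P x^s` is `lm_t(q) lm_s(P)`, which is nonzero because `lm_s(P)` has independent rows.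
Hence `q P` has `s`-degree exactly `D` and this vector is its `s`-leading row.
-/

lemma WithBot.add_coe_le_coe_iff {x : WithBot ℤ} {c d : ℤ} :
    x + c ≤ d ↔ x ≤ ((d - c : ℤ) : WithBot ℤ) := by
  induction x using WithBot.recBotCoe with
  | bot => simp
  | coe a => norm_cast; omega

lemma WithBot.add_coe_eq_coe_iff {x : WithBot ℤ} {c d : ℤ} :
    x + c = d ↔ x = ((d - c : ℤ) : WithBot ℤ) := by
  induction x using WithBot.recBotCoe with
  | bot => simp
  | coe a => norm_cast; omega

lemma Matrix.vecMul_injective_of_rank_eq_card {m ι F : Type*} [Fintype m] [Fintype ι] [Field F]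
    {M : Matrix m ι F} (h : M.rank = Fintype.card m) : Function.Injective M.vecMul := by
  rw [Matrix.vecMul_injective_iff, linearIndependent_iff_card_eq_finrank_span, ← h,
    M.rank_eq_finrank_span_row, Set.finrank]

lemma pdegZ_of_ne_zero {p : K[X]} (hp : p ≠ 0) : pdegZ p = (p.natDegree : ℤ) := by
  simp [pdegZ, degree_eq_natDegree hp]

lemma pdegZ_mul (p q : K[X]) : pdegZ (p * q) = pdegZ p + pdegZ q := by
  simp only [pdegZ, degree_mul]
  exact WithBot.map_add (Nat.castAddMonoidHom ℤ) _ _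

lemma pdegZ_le_iff {p : K[X]} {e : ℤ} :
    pdegZ p ≤ e ↔ ∀ k : ℕ, e < k → p.coeff k = 0 := by
  rcases eq_or_ne p 0 with rfl | hp
  · simp [pdegZ]
  rw [pdegZ_of_ne_zero hp, WithBot.coe_le_coe]
  refine ⟨fun h k hk => coeff_eq_zero_of_natDegree_lt (by omega), fun h => ?_⟩
  by_contra! hlt
  exact hp (leadingCoeff_eq_zero.mp (h _ hlt))

lemma pdegZ_sum_le {ι : Type*} {S : Finset ι} {f : ι → K[X]} {e : ℤ}
    (h : ∀ l ∈ S, pdegZ (f l) ≤ e) : pdegZ (∑ l ∈ S, f l) ≤ e := by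
  simp only [pdegZ_le_iff, finsetSum_coeff] at h ⊢
  exact fun k hk => Finset.sum_eq_zero fun l hl => h l hl k hk

def coeffZ (p : K[X]) (e : ℤ) : K := if 0 ≤ e then p.coeff e.toNat else 0

lemma coeffZ_natCast (p : K[X]) (k : ℕ) : coeffZ p k = p.coeff k := by
  simp [coeffZ]

lemma coeffZ_zero (e : ℤ) : coeffZ (0 : K[X]) e = 0 := by
  simp [coeffZ]

lemma coeffZ_sum {ι : Type*} (S : Finset ι) (f : ι → K[X]) (e : ℤ) :
    coeffZ (∑ l ∈ S, f l) e = ∑ l ∈ S, coeffZ (f l) e := by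
  unfold coeffZ
  split_ifs <;> simp [finsetSum_coeff]

lemma coeffZ_of_pdegZ_le {p : K[X]} {e : ℤ} (h : pdegZ p ≤ e) :
    coeffZ p e = if pdegZ p = e then p.leadingCoeff else 0 := by
  rcases eq_or_ne p 0 with rfl | hp
  · simp [coeffZ_zero]
  rw [pdegZ_of_ne_zero hp, WithBot.coe_le_coe] at h
  lift e to ℕ using (by omega)
  simp only [pdegZ_of_ne_zero hp, coeffZ_natCast, WithBot.coe_inj, Nat.cast_inj]
  split_ifs with he
  · rw [← he, coeff_natDegree]
  · exact coeff_eq_zero_of_natDegree_lt (by omega)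

lemma coeffZ_mul_of_pdegZ_le {p q : K[X]} {a b : ℤ} (hp : pdegZ p ≤ a) (hq : pdegZ q ≤ b) :
    coeffZ (p * q) (a + b) = coeffZ p a * coeffZ q b := by
  rcases eq_or_ne p 0 with rfl | hp0
  · simp [coeffZ_zero]
  rcases eq_or_ne q 0 with rfl | hq0
  · simp [coeffZ_zero]
  rw [pdegZ_of_ne_zero hp0, WithBot.coe_le_coe] at hp
  rw [pdegZ_of_ne_zero hq0, WithBot.coe_le_coe] at hq
  lift a to ℕ using (by omega)
  lift b to ℕ using (by omega)
  rw [← Nat.cast_add, coeffZ_natCast, coeffZ_natCast, coeffZ_natCast]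
  exact coeff_mul_add_eq_of_natDegree_le (by omega) (by omega)

section ShiftedRows

variable {m n : ℕ} {s : Fin n → ℤ}

/-- The coefficient of degree `d` of the row `p · x^s`. -/
def shiftCoeff (s : Fin n → ℤ) (p : Fin n → K[X]) (d : ℤ) : Fin n → K :=
  fun j => coeffZ (p j) (d - s j)

lemma le_sdeg (s : Fin n → ℤ) (p : Fin n → K[X]) (j : Fin n) :
    pdegZ (p j) + (s j : WithBot ℤ) ≤ sdeg s p :=
  Finset.le_sup (f := fun j => pdegZ (p j) + (s j : WithBot ℤ)) (Finset.mem_univ j)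

lemma sdeg_le_iff {p : Fin n → K[X]} {b : WithBot ℤ} :
    sdeg s p ≤ b ↔ ∀ j, pdegZ (p j) + (s j : WithBot ℤ) ≤ b := by
  simp [sdeg]

lemma exists_ne_zero_pdegZ_add_eq_sdeg {p : Fin n → K[X]} (hp : p ≠ 0) :
    ∃ j, p j ≠ 0 ∧ pdegZ (p j) + (s j : WithBot ℤ) = sdeg s p := by
  obtain ⟨j₀, hj₀⟩ : ∃ j, p j ≠ 0 := Function.ne_iff.mp hp
  have : Nonempty (Fin n) := ⟨j₀⟩
  obtain ⟨j, -, hj⟩ := Finset.exists_mem_eq_sup Finset.univ Finset.univ_nonempty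
    fun j => pdegZ (p j) + (s j : WithBot ℤ)
  refine ⟨j, fun h0 => ?_, hj.symm⟩
  have hle := le_sdeg s p j₀
  rw [sdeg, hj, h0, pdegZ_of_ne_zero hj₀] at hle
  simp [pdegZ] at hle

lemma exists_sdeg_eq_coe {p : Fin n → K[X]} (hp : p ≠ 0) : ∃ d : ℤ, sdeg s p = d := by
  obtain ⟨j, hpj, hj⟩ := exists_ne_zero_pdegZ_add_eq_sdeg (s := s) hp
  exact ⟨(p j).natDegree + s j, by rw [← hj, pdegZ_of_ne_zero hpj]; norm_cast⟩

lemma pdegZ_le_of_sdeg_le {p : Fin n → K[X]} {d : ℤ} (h : sdeg s p ≤ d) (j : Fin n) :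
    pdegZ (p j) ≤ ((d - s j : ℤ) : WithBot ℤ) :=
  WithBot.add_coe_le_coe_iff.mp ((le_sdeg s p j).trans h)

lemma le_sdeg_of_shiftCoeff_ne_zero {p : Fin n → K[X]} {d : ℤ} (h : shiftCoeff s p d ≠ 0) :
    (d : WithBot ℤ) ≤ sdeg s p := by
  obtain ⟨j, hj⟩ : ∃ j, shiftCoeff s p d j ≠ 0 := Function.ne_iff.mp h
  by_contra! hlt
  refine hj ?_
  rw [shiftCoeff, coeffZ_of_pdegZ_le (pdegZ_le_of_sdeg_le hlt.le j), if_neg]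
  intro heq
  have := le_sdeg s p j
  rw [WithBot.add_coe_eq_coe_iff.mpr heq] at this
  exact this.not_gt hlt

lemma leadMat_row_eq_shiftCoeff {P : Matrix (Fin m) (Fin n) K[X]} {i : Fin m} {d : ℤ}
    (h : sdeg s (P i) = d) : leadMat s P i = shiftCoeff s (P i) d := by
  ext j
  rw [shiftCoeff, coeffZ_of_pdegZ_le (pdegZ_le_of_sdeg_le h.le j)]
  simp only [leadMat, of_apply, h, WithBot.add_coe_eq_coe_iff]

lemma leadMat_row_eq_zero_iff {P : Matrix (Fin m) (Fin n) K[X]} {i : Fin m} :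
    leadMat s P i = 0 ↔ P i = 0 := by
  refine ⟨fun h => ?_, fun h => funext fun j => by simp [leadMat, h]⟩
  by_contra hP
  obtain ⟨j, hPij, hj⟩ := exists_ne_zero_pdegZ_add_eq_sdeg (s := s) hP
  have := congrFun h j
  simp only [leadMat, of_apply, Pi.zero_apply, hj, if_true] at this
  exact hPij (leadingCoeff_eq_zero.mp this)

section VecMul

variable {t : Fin m → ℤ} {P : Matrix (Fin m) (Fin n) K[X]} {q : Fin m → K[X]} {d : ℤ}

lemma sdeg_vecMul_le (hP : ∀ l, sdeg s (P l) ≤ t l) (hq : sdeg t q ≤ d) :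
    sdeg s (q ᵥ* P) ≤ d := by
  refine sdeg_le_iff.mpr fun j => WithBot.add_coe_le_coe_iff.mpr ?_
  refine pdegZ_sum_le (S := Finset.univ) (f := fun l => q l * P l j) fun l _ => ?_
  rw [pdegZ_mul, show d - s j = (d - t l) + (t l - s j) by ring, WithBot.coe_add]
  exact add_le_add (pdegZ_le_of_sdeg_le hq l) (pdegZ_le_of_sdeg_le (hP l) j)

lemma shiftCoeff_vecMul (hP : ∀ l, sdeg s (P l) ≤ t l) (hq : sdeg t q ≤ d) :
    shiftCoeff s (q ᵥ* P) d =
      shiftCoeff t q d ᵥ* Matrix.of fun l => shiftCoeff s (P l) (t l) := by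
  ext j
  simp only [shiftCoeff, vecMul, dotProduct, of_apply, coeffZ_sum]
  refine Finset.sum_congr rfl fun l _ => ?_
  rw [show d - s j = (d - t l) + (t l - s j) by ring]
  exact coeffZ_mul_of_pdegZ_le (pdegZ_le_of_sdeg_le hq l) (pdegZ_le_of_sdeg_le (hP l) j)

end VecMul

end ShiftedRows

/-- The `s`-leading matrix of a product with an `s`-reduced matrix. -/
theorem stmt1 {K : Type*} [Field K] {m n : ℕ}
    (P : Matrix (Fin m) (Fin n) K[X]) (s : Fin n → ℤ) (hred : IsShiftReduced s P)
    (t : Fin m → ℤ) (ht : ∀ i, (t i : WithBot ℤ) = sdeg s (P i)) :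
    ∀ k : ℕ, 1 ≤ k → ∀ Q : Matrix (Fin k) (Fin m) K[X],
      leadMat s (Q * P) = leadMat t Q * leadMat s P := by
  intro k _ Q
  funext i
  rw [mul_apply_eq_vecMul]
  by_cases hQi : Q i = 0
  · have hQPi : (Q * P) i = 0 := by rw [mul_apply_eq_vecMul, hQi, zero_vecMul]
    rw [leadMat_row_eq_zero_iff.mpr hQPi, leadMat_row_eq_zero_iff.mpr hQi, zero_vecMul]
  obtain ⟨d, hd⟩ := exists_sdeg_eq_coe (s := t) hQi
  have hPt : ∀ l, sdeg s (P l) ≤ t l := fun l => (ht l).ge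
  have hlmP : leadMat s P = Matrix.of fun l => shiftCoeff s (P l) (t l) :=
    funext fun l => leadMat_row_eq_shiftCoeff (ht l).symm
  have hcoeff : shiftCoeff s ((Q * P) i) d = leadMat t Q i ᵥ* leadMat s P := by
    rw [mul_apply_eq_vecMul, shiftCoeff_vecMul hPt hd.le, leadMat_row_eq_shiftCoeff hd, hlmP]
  have hne : leadMat t Q i ᵥ* leadMat s P ≠ 0 := fun h0 =>
    hQi <| leadMat_row_eq_zero_iff.mp <| vecMul_injective_of_rank_eq_card
      (by simpa [IsShiftReduced] using hred) (h0.trans (zero_vecMul _).symm)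
  have hdeg : sdeg s ((Q * P) i) = d :=
    le_antisymm (sdeg_vecMul_le hPt hd.le) (le_sdeg_of_shiftCoeff_ne_zero (hcoeff ▸ hne))
  rw [leadMat_row_eq_shiftCoeff hdeg, hcoeff]

end
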